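/- Let −∞ ≤ a < b ≤ ∞ and let I be one of the intervals (a,b), (a,b], [a,b), [a,b]. Let λ₁, λ₂ : I → ℂ be continuous and let A(t) be the diagonal matrix with entries λ₁(t), λ₂(t). Suppose that κ₁₃(t) := max{ ∫_t^b e^{−∫_t^s Re λ₁(τ) dτ} ds, ∫_a^t e^{∫_s^t Re λ₂(τ) dτ} ds } exists for all t ∈ I, that K₁₃ := sup_{t∈I} κ₁₃(t) < ∞, and that lim_{t→b⁻} ∫_{t₀}^t Re λ₁(s) ds = ∞ and lim_{t→a⁺} ∫_{t₀}^t Re λ₂(s) ds = ∞ for t₀ ∈ (a,b). Then the system x' = A(t)x is Ulam stable on I (with respect to the maximum norm on ℂ²), and every Ulam constant K for x' = A(t)x on I satisfies K ≥ K₁₃. -/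

import Mathlib

open MeasureTheory Filter Set

noncomputable section

/-- Ulam stability on `I` with constant `K` for the system `x' = A(t) x` on `ℂ²`,
with respect to the maximum norm (the sup norm on `Fin 2 → ℂ`). -/
def UlamStable2C (I : Set ℝ) (A : ℝ → Matrix (Fin 2) (Fin 2) ℂ) (K : ℝ) : Prop :=
  0 < K ∧
  ∀ ε : ℝ, 0 < ε →
    ∀ φ φd : ℝ → Fin 2 → ℂ,
      (∀ t ∈ I, HasDerivWithinAt φ (φd t) I t) →
      ContinuousOn φd I →
      (∀ t ∈ I, ‖φd t - (A t).mulVec (φ t)‖ ≤ ε) →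
      ∃ x : ℝ → Fin 2 → ℂ,
        (∀ t ∈ I, HasDerivWithinAt x ((A t).mulVec (x t)) I t) ∧
        ∀ t ∈ I, ‖φ t - x t‖ ≤ K * ε

/-- `κ₁₃(t)`. -/
def kappa13 (a b : EReal) (l1 l2 : ℝ → ℂ) (t : ℝ) : ℝ :=
  max (∫ s in {s : ℝ | t < s ∧ (s : EReal) < b}, Real.exp (-∫ τ in t..s, (l1 τ).re))
    (∫ s in {s : ℝ | a < (s : EReal) ∧ s < t}, Real.exp (∫ τ in s..t, (l2 τ).re))

/-!
The system decouples, so it suffices to treat the scalar equation `x' = λ x`; let `F` be a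
primitive of `λ`. If `φ' - λ φ = r` with `|r| ≤ ε` and `H` is a primitive of `e^{-F} r`, then
`φ - e^F H` is an exact solution at distance `e^{Re F} |H|` from `φ` (variation of constants).
Taking `H(t) = -∫_t^b e^{-F} r` for the first component and `H(t) = ∫_a^t e^{-F} r` for the
second bounds this distance by `ε κ₁₃(t)`.

Conversely, `φ = e^F ∫_t^b e^{-Re F}` has a defect of modulus `1`, and every solution is `c e^F`.
A solution within `K` of `φ` gives `e^{Re F} |c| ≤ K + K₁₃`, which forces `c = 0` because
`Re F → ∞` at `b`; then `e^{Re F(t)} ∫_t^b e^{-Re F}`, the first half of `κ₁₃(t)`, is at most `K`.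
The second half is handled in the same way at `a`.
-/

open Topology

section OrdConnected

variable {I : Set ℝ} {t : ℝ}

theorem exists_Icc_mem_nhdsWithin (ht : t ∈ I) :
    ∃ p ∈ I, ∃ q ∈ I, t ∈ Icc p q ∧ Icc p q ∈ 𝓝[I] t := by
  have left : ∃ p ∈ I, p ≤ t ∧ Ici p ∈ 𝓝[I] t := by
    by_cases h : ∃ p ∈ I, p < t
    · obtain ⟨p, hp, hpt⟩ := h
      exact ⟨p, hp, hpt.le, mem_nhdsWithin_of_mem_nhds (Ici_mem_nhds hpt)⟩
    · push Not at h
      exact ⟨t, ht, le_rfl, mem_of_superset self_mem_nhdsWithin h⟩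
  have right : ∃ q ∈ I, t ≤ q ∧ Iic q ∈ 𝓝[I] t := by
    by_cases h : ∃ q ∈ I, t < q
    · obtain ⟨q, hq, htq⟩ := h
      exact ⟨q, hq, htq.le, mem_nhdsWithin_of_mem_nhds (Iic_mem_nhds htq)⟩
    · push Not at h
      exact ⟨t, ht, le_rfl, mem_of_superset self_mem_nhdsWithin h⟩
  obtain ⟨p, hp, hpt, hpI⟩ := left
  obtain ⟨q, hq, htq, hqI⟩ := right
  exact ⟨p, hp, q, hq, ⟨hpt, htq⟩, Ici_inter_Iic (a := p) (b := q) ▸ inter_mem hpI hqI⟩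

variable {E : Type*} [NormedAddCommGroup E] [NormedSpace ℝ E] [CompleteSpace E]

theorem Set.OrdConnected.hasDerivWithinAt_intervalIntegral (hI : I.OrdConnected) {g : ℝ → E}
    (hg : ContinuousOn g I) {t₀ : ℝ} (ht₀ : t₀ ∈ I) (ht : t ∈ I) :
    HasDerivWithinAt (fun u => ∫ τ in t₀..u, g τ) (g t) I t := by
  obtain ⟨p, hp, q, hq, htpq, hpqI⟩ := exists_Icc_mem_nhdsWithin ht
  have hg' : ContinuousOn g (Icc p q) := hg.mono (hI.out hp hq)
  have : Fact (t ∈ Icc p q) := ⟨htpq⟩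
  exact (intervalIntegral.integral_hasDerivWithinAt_right
    ((hg.mono (hI.uIcc_subset ht₀ ht)).intervalIntegrable)
    (hg'.stronglyMeasurableAtFilter_nhdsWithin measurableSet_Icc t)
    (hg' t htpq)).mono_of_mem_nhdsWithin hpqI

theorem Set.OrdConnected.re_intervalIntegral (hI : I.OrdConnected) {l : ℝ → ℂ}
    (hl : ContinuousOn l I) {t₀ : ℝ} (ht₀ : t₀ ∈ I) (ht : t ∈ I) :
    (∫ τ in t₀..t, l τ).re = ∫ τ in t₀..t, (l τ).re :=
  (intervalIntegral.intervalIntegral_re (hl.mono (hI.uIcc_subset ht₀ ht)).intervalIntegrable).symm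

theorem Set.OrdConnected.exists_eq_mul_exp (hI : I.OrdConnected) {l F x : ℝ → ℂ}
    (hF : ∀ t ∈ I, HasDerivWithinAt F (l t) I t)
    (hx : ∀ t ∈ I, HasDerivWithinAt x (l t * x t) I t) :
    ∃ c : ℂ, ∀ t ∈ I, x t = c * Complex.exp (F t) := by
  rcases I.eq_empty_or_nonempty with rfl | ⟨t₀, ht₀⟩
  · exact ⟨0, by simp⟩
  have hw : ∀ t ∈ I, HasDerivWithinAt (fun u => x u * Complex.exp (-F u)) 0 I t := by
    intro t ht
    exact ((hx t ht).mul (hF t ht).neg.cexp).congr_deriv (by simp only [Pi.neg_apply]; ring)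
  refine ⟨x t₀ * Complex.exp (-F t₀), fun t ht => ?_⟩
  have hconst := hI.convex.norm_image_sub_le_of_norm_hasDerivWithin_le hw
    (fun _ _ => norm_zero.le) ht₀ ht
  rw [zero_mul, norm_le_zero_iff, sub_eq_zero] at hconst
  rw [← hconst, mul_assoc, ← Complex.exp_add, neg_add_cancel, Complex.exp_zero, mul_one]

end OrdConnected

section Kernel

variable {I : Set ℝ} {f : ℝ → ℝ} {t₀ t : ℝ} {S : Set ℝ}

theorem Set.OrdConnected.exp_intervalIntegral_eq (hI : I.OrdConnected) (hf : ContinuousOn f I)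
    (ht₀ : t₀ ∈ I) {s : ℝ} (hs : s ∈ I) (ht : t ∈ I) :
    Real.exp (∫ τ in s..t, f τ) =
      Real.exp (∫ τ in t₀..t, f τ) * Real.exp (-∫ τ in t₀..s, f τ) := by
  rw [← Real.exp_add, ← sub_eq_add_neg, intervalIntegral.integral_interval_sub_left
    (hf.mono (hI.uIcc_subset ht₀ ht)).intervalIntegrable
    (hf.mono (hI.uIcc_subset ht₀ hs)).intervalIntegrable]

theorem Set.OrdConnected.setIntegral_exp_intervalIntegral (hI : I.OrdConnected)
    (hf : ContinuousOn f I) (ht₀ : t₀ ∈ I) (hSI : S ⊆ I) (hSm : MeasurableSet S) (ht : t ∈ I) :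
    ∫ s in S, Real.exp (∫ τ in s..t, f τ) =
      Real.exp (∫ τ in t₀..t, f τ) * ∫ s in S, Real.exp (-∫ τ in t₀..s, f τ) := by
  rw [← integral_const_mul]
  exact setIntegral_congr_fun hSm fun s hs => hI.exp_intervalIntegral_eq hf ht₀ (hSI hs) ht

theorem Set.OrdConnected.integrableOn_exp_neg_intervalIntegral (hI : I.OrdConnected)
    (hf : ContinuousOn f I) (ht₀ : t₀ ∈ I) (hSI : S ⊆ I) (hSm : MeasurableSet S) (ht : t ∈ I)
    (h : IntegrableOn (fun s => Real.exp (∫ τ in s..t, f τ)) S) :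
    IntegrableOn (fun s => Real.exp (-∫ τ in t₀..s, f τ)) S := by
  refine IntegrableOn.congr_fun (h.const_mul (Real.exp (-∫ τ in t₀..t, f τ))) (fun s hs => ?_) hSm
  rw [hI.exp_intervalIntegral_eq hf ht₀ (hSI hs) ht, ← mul_assoc, ← Real.exp_add,
    neg_add_cancel, Real.exp_zero, one_mul]

end Kernel

section UlamConstant

variable {I : Set ℝ} {l F : ℝ → ℂ} {K : ℝ}

def IsUlamConstant (I : Set ℝ) (l : ℝ → ℂ) (K : ℝ) : Prop :=
  ∀ ε : ℝ, 0 < ε → ∀ φ φd : ℝ → ℂ,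
    (∀ t ∈ I, HasDerivWithinAt φ (φd t) I t) → ContinuousOn φd I →
    (∀ t ∈ I, ‖φd t - l t * φ t‖ ≤ ε) →
    ∃ x : ℝ → ℂ, (∀ t ∈ I, HasDerivWithinAt x (l t * x t) I t) ∧
      ∀ t ∈ I, ‖φ t - x t‖ ≤ K * ε

theorem exists_solution_norm_sub_eq {φ φd H : ℝ → ℂ}
    (hF : ∀ t ∈ I, HasDerivWithinAt F (l t) I t)
    (hφ : ∀ t ∈ I, HasDerivWithinAt φ (φd t) I t)
    (hH : ∀ t ∈ I, HasDerivWithinAt H (Complex.exp (-F t) * (φd t - l t * φ t)) I t) :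
    ∃ x : ℝ → ℂ, (∀ t ∈ I, HasDerivWithinAt x (l t * x t) I t) ∧
      ∀ t ∈ I, ‖φ t - x t‖ = Real.exp (F t).re * ‖H t‖ := by
  refine ⟨fun t => φ t - Complex.exp (F t) * H t, fun t ht => ?_, fun t _ => ?_⟩
  · have hexp : Complex.exp (F t) * Complex.exp (-F t) = 1 := by
      rw [← Complex.exp_add, add_neg_cancel, Complex.exp_zero]
    exact ((hφ t ht).sub ((hF t ht).cexp.mul (hH t ht))).congr_deriv
      (by linear_combination (-(φd t - l t * φ t)) * hexp)
  · rw [sub_sub_cancel, norm_mul, Complex.norm_exp]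

theorem eq_zero_of_eventually_exp_mul_norm_le {L : Filter ℝ} [L.NeBot] {A : ℝ → ℝ}
    (hA : Tendsto A L atTop) {c : ℂ} {M : ℝ} (h : ∀ᶠ t in L, Real.exp (A t) * ‖c‖ ≤ M) :
    c = 0 := by
  by_contra hc
  have hgrow := (Real.tendsto_exp_atTop.comp hA).atTop_mul_const (norm_pos_iff.2 hc)
  obtain ⟨t, hlt, hle⟩ := ((hgrow.eventually_gt_atTop M).and h).exists
  exact (hlt.trans_le hle).false

theorem IsUlamConstant.exp_re_mul_norm_le (hK : IsUlamConstant I l K) (hI : I.OrdConnected)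
    (hl : ContinuousOn l I) (hF : ∀ t ∈ I, HasDerivWithinAt F (l t) I t) {G g : ℝ → ℂ}
    (hG : ∀ t ∈ I, HasDerivWithinAt G (g t) I t) (hg : ContinuousOn g I)
    (hgF : ∀ t ∈ I, ‖g t‖ ≤ Real.exp (-(F t).re)) {C : ℝ}
    (hGC : ∀ t ∈ I, Real.exp (F t).re * ‖G t‖ ≤ C) {L : Filter ℝ} [L.NeBot]
    (hLI : ∀ᶠ t in L, t ∈ I) (hFL : Tendsto (fun t => (F t).re) L atTop) :
    ∀ t ∈ I, Real.exp (F t).re * ‖G t‖ ≤ K := by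
  set φ : ℝ → ℂ := fun t => Complex.exp (F t) * G t
  set φd : ℝ → ℂ := fun t => l t * φ t + Complex.exp (F t) * g t
  have hφ : ∀ t ∈ I, HasDerivWithinAt φ (φd t) I t := fun t ht =>
    ((hF t ht).cexp.mul (hG t ht)).congr_deriv (by simp only [φd, φ]; ring)
  have hφd : ContinuousOn φd I := by
    have hFc : ContinuousOn F I := fun t ht => (hF t ht).continuousWithinAt
    exact (hl.mul fun t ht => (hφ t ht).continuousWithinAt).add
      ((Complex.continuous_exp.comp_continuousOn hFc).mul hg)
  have hres : ∀ t ∈ I, ‖φd t - l t * φ t‖ ≤ 1 := by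
    intro t ht
    rw [add_sub_cancel_left, norm_mul, Complex.norm_exp]
    calc Real.exp (F t).re * ‖g t‖ ≤ Real.exp (F t).re * Real.exp (-(F t).re) := by
          gcongr; exact hgF t ht
      _ = 1 := by rw [← Real.exp_add, add_neg_cancel, Real.exp_zero]
  obtain ⟨x, hx, hφx⟩ := hK 1 one_pos φ φd hφ hφd hres
  obtain ⟨c, hc⟩ := hI.exists_eq_mul_exp hF hx
  have hdist : ∀ t ∈ I, Real.exp (F t).re * ‖G t - c‖ ≤ K := by
    intro t ht
    have h := hφx t ht
    rwa [mul_one, hc t ht, show φ t - c * Complex.exp (F t) = Complex.exp (F t) * (G t - c) by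
      ring, norm_mul, Complex.norm_exp] at h
  have hc0 : c = 0 := by
    refine eq_zero_of_eventually_exp_mul_norm_le hFL (M := K + C) (hLI.mono fun t ht => ?_)
    have hnorm : ‖c‖ ≤ ‖G t - c‖ + ‖G t‖ := by
      simpa [add_comm] using norm_sub_le (G t) (G t - c)
    calc Real.exp (F t).re * ‖c‖ ≤ Real.exp (F t).re * (‖G t - c‖ + ‖G t‖) := by gcongr
      _ ≤ K + C := by rw [mul_add]; exact add_le_add (hdist t ht) (hGC t ht)
  intro t ht
  simpa [hc0] using hdist t ht

end UlamConstant

section Tails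

variable {a b : EReal} {I : Set ℝ} {E : Type*} [NormedAddCommGroup E] [NormedSpace ℝ E]

theorem setIntegral_eq_intervalIntegral_of_Ioo_subset_of_subset_Icc {f : ℝ → E} {S : Set ℝ}
    {t₁ t₂ : ℝ} (h12 : t₁ ≤ t₂) (hIoo : Ioo t₁ t₂ ⊆ S) (hIcc : S ⊆ Icc t₁ t₂) :
    ∫ s in S, f s = ∫ s in t₁..t₂, f s := by
  rw [intervalIntegral.integral_of_le h12, integral_Ioc_eq_integral_Ioo]
  exact setIntegral_congr_set
    ((hIcc.eventuallyLE.trans Ioo_ae_eq_Icc.symm.le).antisymm hIoo.eventuallyLE)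

def upperTail (b : EReal) (t : ℝ) : Set ℝ := {s | t < s ∧ (s : EReal) < b}

def lowerTail (a : EReal) (t : ℝ) : Set ℝ := {s | a < (s : EReal) ∧ s < t}

theorem ordConnected_of_ereal (hI1 : ∀ x : ℝ, a < (x : EReal) → (x : EReal) < b → x ∈ I)
    (hI2 : ∀ x ∈ I, a ≤ (x : EReal) ∧ (x : EReal) ≤ b) : I.OrdConnected := by
  refine ⟨fun x hx y hy z hz => ?_⟩
  rcases eq_or_lt_of_le hz.1 with rfl | hxz
  · exact hx
  rcases eq_or_lt_of_le hz.2 with rfl | hzy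
  · exact hy
  exact hI1 z ((hI2 x hx).1.trans_lt (EReal.coe_lt_coe_iff.2 hxz))
    ((EReal.coe_lt_coe_iff.2 hzy).trans_le (hI2 y hy).2)

theorem measurableSet_upperTail (b : EReal) (t : ℝ) :
    MeasurableSet (upperTail b t) :=
  measurableSet_Ioi.inter (measurableSet_Iio.preimage continuous_coe_real_ereal.measurable)

theorem measurableSet_lowerTail (a : EReal) (t : ℝ) :
    MeasurableSet (lowerTail a t) :=
  (measurableSet_Ioi.preimage continuous_coe_real_ereal.measurable).inter measurableSet_Iio

theorem upperTail_subset (hI1 : ∀ x : ℝ, a < (x : EReal) → (x : EReal) < b → x ∈ I) {t : ℝ}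
    (ht : a ≤ (t : EReal)) : upperTail b t ⊆ I :=
  fun s hs => hI1 s (ht.trans_lt (EReal.coe_lt_coe_iff.2 hs.1)) hs.2

theorem lowerTail_subset (hI1 : ∀ x : ℝ, a < (x : EReal) → (x : EReal) < b → x ∈ I) {t : ℝ}
    (ht : (t : EReal) ≤ b) : lowerTail a t ⊆ I :=
  fun s hs => hI1 s hs.1 ((EReal.coe_lt_coe_iff.2 hs.2).trans_le ht)

theorem setIntegral_upperTail_eq_add {f : ℝ → E} {t₁ t₂ : ℝ} (h12 : t₁ ≤ t₂)
    (ht₂ : (t₂ : EReal) ≤ b) (hf : IntegrableOn f (upperTail b t₁)) :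
    ∫ s in upperTail b t₁, f s =
      (∫ s in t₁..t₂, f s) + ∫ s in upperTail b t₂, f s := by
  have hdiff : upperTail b t₁ \ Iic t₂ = upperTail b t₂ := by
    ext s
    simp only [upperTail, Set.mem_sdiff, mem_Iic, not_le]
    exact ⟨fun h => ⟨h.2, h.1.2⟩, fun h => ⟨⟨h12.trans_lt h.1, h.2⟩, h.1⟩⟩
  rw [← integral_inter_add_sdiff measurableSet_Iic hf, hdiff]
  congr 1
  exact setIntegral_eq_intervalIntegral_of_Ioo_subset_of_subset_Icc h12
      (fun s hs => ⟨⟨hs.1, (EReal.coe_lt_coe_iff.2 hs.2).trans_le ht₂⟩, hs.2.le⟩)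
      (fun s hs => ⟨hs.1.1.le, hs.2⟩)

theorem setIntegral_lowerTail_eq_add {f : ℝ → E} {t₁ t₂ : ℝ} (h12 : t₁ ≤ t₂)
    (ht₁ : a ≤ (t₁ : EReal)) (hf : IntegrableOn f (lowerTail a t₂)) :
    ∫ s in lowerTail a t₂, f s =
      (∫ s in t₁..t₂, f s) + ∫ s in lowerTail a t₁, f s := by
  have hdiff : lowerTail a t₂ \ Ici t₁ = lowerTail a t₁ := by
    ext s
    simp only [lowerTail, Set.mem_sdiff, mem_Ici, not_le]
    exact ⟨fun h => ⟨h.1.1, h.2⟩, fun h => ⟨⟨h.1, h.2.trans_le h12⟩, h.2⟩⟩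
  rw [← integral_inter_add_sdiff measurableSet_Ici hf, hdiff]
  congr 1
  exact setIntegral_eq_intervalIntegral_of_Ioo_subset_of_subset_Icc h12
      (fun s hs => ⟨⟨ht₁.trans_lt (EReal.coe_lt_coe_iff.2 hs.1), hs.2⟩, hs.1.le⟩)
      (fun s hs => ⟨hs.2, hs.1.2.le⟩)

theorem hasDerivWithinAt_setIntegral_upperTail [CompleteSpace E] (hI : I.OrdConnected)
    (hb : ∀ u ∈ I, (u : EReal) ≤ b) {f : ℝ → E} (hf : ContinuousOn f I)
    (hfi : ∀ u ∈ I, IntegrableOn f (upperTail b u)) {t : ℝ} (ht : t ∈ I) :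
    HasDerivWithinAt (fun u => ∫ s in upperTail b u, f s) (-f t) I t := by
  refine ((hI.hasDerivWithinAt_intervalIntegral hf ht ht).const_sub
    (∫ s in upperTail b t, f s)).congr_of_mem
    (fun u hu => ?_) ht
  rcases le_total t u with htu | hut
  · rw [setIntegral_upperTail_eq_add htu (hb u hu) (hfi t ht)]
    abel
  · rw [setIntegral_upperTail_eq_add hut (hb t ht) (hfi u hu), intervalIntegral.integral_symm]
    abel

theorem hasDerivWithinAt_setIntegral_lowerTail [CompleteSpace E] (hI : I.OrdConnected)
    (ha : ∀ u ∈ I, a ≤ (u : EReal)) {f : ℝ → E} (hf : ContinuousOn f I)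
    (hfi : ∀ u ∈ I, IntegrableOn f (lowerTail a u)) {t : ℝ} (ht : t ∈ I) :
    HasDerivWithinAt (fun u => ∫ s in lowerTail a u, f s) (f t) I t := by
  refine ((hI.hasDerivWithinAt_intervalIntegral hf ht ht).add_const
    (∫ s in lowerTail a t, f s)).congr_of_mem
    (fun u hu => ?_) ht
  rcases le_total t u with htu | hut
  · rw [setIntegral_lowerTail_eq_add htu (ha t ht) (hfi u hu)]
  · rw [setIntegral_lowerTail_eq_add hut (ha u hu) (hfi t ht), intervalIntegral.integral_symm]
    abel

theorem setIntegral_exp_upperTail_pos {b : EReal} {t₀ : ℝ} (h : (t₀ : EReal) < b) {f : ℝ → ℝ}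
    (hf : IntegrableOn (fun s => Real.exp (f s)) (upperTail b t₀)) :
    0 < ∫ s in upperTail b t₀, Real.exp (f s) := by
  obtain ⟨t₁, ht₀t₁, ht₁b⟩ := EReal.exists_between_coe_real h
  have hopen : IsOpen (upperTail b t₀) :=
    isOpen_Ioi.inter (isOpen_Iio.preimage continuous_coe_real_ereal)
  have : NeZero (volume.restrict (upperTail b t₀)) :=
    ⟨fun h0 => hopen.measure_ne_zero volume ⟨t₁, EReal.coe_lt_coe_iff.1 ht₀t₁, ht₁b⟩
      (Measure.restrict_eq_zero.1 h0)⟩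
  exact integral_exp_pos hf

theorem comap_coe_nhdsLT_neBot {t₀ : ℝ} (h : (t₀ : EReal) < b) :
    (comap ((↑) : ℝ → EReal) (𝓝[<] b)).NeBot := by
  refine comap_neBot fun s hs => ?_
  obtain ⟨l, hl, hls⟩ := (mem_nhdsLT_iff_exists_Ioo_subset' h).1 hs
  obtain ⟨r, hlr, hrb⟩ := EReal.exists_between_coe_real hl
  exact ⟨r, hls ⟨hlr, hrb⟩⟩

theorem comap_coe_nhdsGT_neBot {t₀ : ℝ} (h : a < (t₀ : EReal)) :
    (comap ((↑) : ℝ → EReal) (𝓝[>] a)).NeBot := by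
  refine comap_neBot fun s hs => ?_
  obtain ⟨u, hu, hus⟩ := (mem_nhdsGT_iff_exists_Ioo_subset' h).1 hs
  obtain ⟨r, har, hru⟩ := EReal.exists_between_coe_real hu
  exact ⟨r, hus ⟨har, hru⟩⟩

theorem eventually_comap_coe_nhdsLT_mem
    (hI1 : ∀ x : ℝ, a < (x : EReal) → (x : EReal) < b → x ∈ I) {t₀ : ℝ}
    (hat₀ : a < (t₀ : EReal)) (ht₀b : (t₀ : EReal) < b) :
    ∀ᶠ t in comap ((↑) : ℝ → EReal) (𝓝[<] b), t ∈ I :=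
  mem_of_superset (preimage_mem_comap (Ioo_mem_nhdsLT ht₀b))
    fun t ht => hI1 t (hat₀.trans ht.1) ht.2

theorem eventually_comap_coe_nhdsGT_mem
    (hI1 : ∀ x : ℝ, a < (x : EReal) → (x : EReal) < b → x ∈ I) {t₀ : ℝ}
    (hat₀ : a < (t₀ : EReal)) (ht₀b : (t₀ : EReal) < b) :
    ∀ᶠ t in comap ((↑) : ℝ → EReal) (𝓝[>] a), t ∈ I :=
  mem_of_superset (preimage_mem_comap (Ioo_mem_nhdsGT hat₀))
    fun t ht => hI1 t ht.1 (ht.2.trans ht₀b)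

end Tails

/-- Integration over `S t` is, up to sign, a primitive on `I`: what the half-lines `(t, b)`
and `(a, t)` have in common. -/
structure IsTailFamily (I : Set ℝ) (S : ℝ → Set ℝ) : Prop where
  subset : ∀ t ∈ I, S t ⊆ I
  measurableSet : ∀ t, MeasurableSet (S t)
  exists_primitive : ∀ f : ℝ → ℂ, ContinuousOn f I → (∀ t ∈ I, IntegrableOn f (S t)) →
    ∃ H : ℝ → ℂ, (∀ t ∈ I, HasDerivWithinAt H (f t) I t) ∧ ∀ t ∈ I, ‖H t‖ = ‖∫ s in S t, f s‖

theorem isTailFamily_upperTail {a b : EReal} {I : Set ℝ}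
    (hI1 : ∀ x : ℝ, a < (x : EReal) → (x : EReal) < b → x ∈ I)
    (hI2 : ∀ x ∈ I, a ≤ (x : EReal) ∧ (x : EReal) ≤ b) :
    IsTailFamily I (upperTail b) :=
  ⟨fun t ht => upperTail_subset hI1 (hI2 t ht).1, measurableSet_upperTail b,
    fun f hf hfi => ⟨fun t => -∫ s in upperTail b t, f s, fun _ ht =>
      (hasDerivWithinAt_setIntegral_upperTail (ordConnected_of_ereal hI1 hI2)
        (fun u hu => (hI2 u hu).2) hf hfi ht).neg.congr_deriv (neg_neg _), fun _ _ => norm_neg _⟩⟩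

theorem isTailFamily_lowerTail {a b : EReal} {I : Set ℝ}
    (hI1 : ∀ x : ℝ, a < (x : EReal) → (x : EReal) < b → x ∈ I)
    (hI2 : ∀ x ∈ I, a ≤ (x : EReal) ∧ (x : EReal) ≤ b) :
    IsTailFamily I (lowerTail a) :=
  ⟨fun t ht => lowerTail_subset hI1 (hI2 t ht).2, measurableSet_lowerTail a,
    fun _ hf hfi => ⟨_, fun _ ht => hasDerivWithinAt_setIntegral_lowerTail
      (ordConnected_of_ereal hI1 hI2) (fun u hu => (hI2 u hu).1) hf hfi ht, fun _ _ => rfl⟩⟩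

section TailKernel

variable {I : Set ℝ} {S : ℝ → Set ℝ} {l : ℝ → ℂ} {K : ℝ}

theorem IsTailFamily.exists_solution_norm_sub_le (hS : IsTailFamily I S) (hI : I.OrdConnected)
    (hl : ContinuousOn l I) {t₀ : ℝ} (ht₀ : t₀ ∈ I)
    (hexp : ∀ t ∈ I, IntegrableOn (fun s => Real.exp (-∫ τ in t₀..s, (l τ).re)) (S t))
    {ε : ℝ} {φ φd : ℝ → ℂ} (hφ : ∀ t ∈ I, HasDerivWithinAt φ (φd t) I t)
    (hφd : ContinuousOn φd I) (hres : ∀ t ∈ I, ‖φd t - l t * φ t‖ ≤ ε) :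
    ∃ x : ℝ → ℂ, (∀ t ∈ I, HasDerivWithinAt x (l t * x t) I t) ∧ ∀ t ∈ I, ‖φ t - x t‖ ≤
      Real.exp (∫ τ in t₀..t, (l τ).re) * ∫ s in S t, ε * Real.exp (-∫ τ in t₀..s, (l τ).re) := by
  set F : ℝ → ℂ := fun t => ∫ τ in t₀..t, l τ
  have hF : ∀ t ∈ I, HasDerivWithinAt F (l t) I t := fun t ht =>
    hI.hasDerivWithinAt_intervalIntegral hl ht₀ ht
  set r : ℝ → ℂ := fun s => Complex.exp (-F s) * (φd s - l s * φ s)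
  have hr : ContinuousOn r I :=
    (Complex.continuous_exp.comp_continuousOn
      (fun t ht => (hF t ht).continuousWithinAt.neg)).mul
      (hφd.sub (hl.mul fun t ht => (hφ t ht).continuousWithinAt))
  have hrb : ∀ t ∈ I, ∀ᵐ s ∂volume.restrict (S t),
      ‖r s‖ ≤ ε * Real.exp (-∫ τ in t₀..s, (l τ).re) := fun t ht =>
    ae_restrict_of_forall_mem (hS.measurableSet t) fun s hs => by
      rw [norm_mul, Complex.norm_exp, Complex.neg_re,
        hI.re_intervalIntegral hl ht₀ (hS.subset t ht hs), mul_comm]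
      gcongr
      exact hres s (hS.subset t ht hs)
  have hbi : ∀ t ∈ I,
      IntegrableOn (fun s => ε * Real.exp (-∫ τ in t₀..s, (l τ).re)) (S t) := fun t ht =>
    (hexp t ht).const_mul ε
  obtain ⟨H, hH, hHnorm⟩ := hS.exists_primitive r hr fun t ht =>
    (hbi t ht).mono' ((hr.mono (hS.subset t ht)).aestronglyMeasurable (hS.measurableSet t))
      (hrb t ht)
  obtain ⟨x, hx, hφx⟩ := exists_solution_norm_sub_eq hF hφ hH
  refine ⟨x, hx, fun t ht => ?_⟩
  rw [hφx t ht, hHnorm t ht, hI.re_intervalIntegral hl ht₀ ht]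
  gcongr
  exact norm_integral_le_of_norm_le (hbi t ht) (hrb t ht)

theorem isUlamConstant_of_isTailFamily (hI : I.OrdConnected) (hS : IsTailFamily I S)
    (hl : ContinuousOn l I)
    (hker : ∀ t ∈ I, IntegrableOn (fun s => Real.exp (∫ τ in s..t, (l τ).re)) (S t))
    (hK : ∀ t ∈ I, ∫ s in S t, Real.exp (∫ τ in s..t, (l τ).re) ≤ K) :
    IsUlamConstant I l K := by
  intro ε _ φ φd hφ hφd hres
  rcases I.eq_empty_or_nonempty with rfl | ⟨t₀, ht₀⟩
  · exact ⟨0, by simp, by simp⟩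
  have hre : ContinuousOn (fun τ => (l τ).re) I := Complex.continuous_re.comp_continuousOn hl
  obtain ⟨x, hx, hφx⟩ := hS.exists_solution_norm_sub_le hI hl ht₀
    (fun t ht => hI.integrableOn_exp_neg_intervalIntegral hre ht₀ (hS.subset t ht)
      (hS.measurableSet t) ht (hker t ht)) hφ hφd hres
  refine ⟨x, hx, fun t ht => (hφx t ht).trans ?_⟩
  rw [integral_const_mul, mul_left_comm, ← hI.setIntegral_exp_intervalIntegral hre ht₀
    (hS.subset t ht) (hS.measurableSet t) ht, mul_comm K]
  gcongr
  exact hK t ht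

theorem IsUlamConstant.setIntegral_le_of_isTailFamily (hK : IsUlamConstant I l K)
    (hI : I.OrdConnected) (hS : IsTailFamily I S) (hl : ContinuousOn l I)
    (hker : ∀ t ∈ I, IntegrableOn (fun s => Real.exp (∫ τ in s..t, (l τ).re)) (S t)) {C : ℝ}
    (hC : ∀ t ∈ I, ∫ s in S t, Real.exp (∫ τ in s..t, (l τ).re) ≤ C) {t₀ : ℝ} (ht₀ : t₀ ∈ I)
    {L : Filter ℝ} [L.NeBot] (hLI : ∀ᶠ t in L, t ∈ I)
    (hL : Tendsto (fun t => ∫ τ in t₀..t, (l τ).re) L atTop) :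
    ∀ t ∈ I, ∫ s in S t, Real.exp (∫ τ in s..t, (l τ).re) ≤ K := by
  have hre : ContinuousOn (fun τ => (l τ).re) I := Complex.continuous_re.comp_continuousOn hl
  set F : ℝ → ℂ := fun t => ∫ τ in t₀..t, l τ
  have hF : ∀ t ∈ I, HasDerivWithinAt F (l t) I t := fun t ht =>
    hI.hasDerivWithinAt_intervalIntegral hl ht₀ ht
  have hFre : ∀ t ∈ I, (F t).re = ∫ τ in t₀..t, (l τ).re := fun t ht =>
    hI.re_intervalIntegral hl ht₀ ht
  set g : ℝ → ℂ := fun s => (Real.exp (-∫ τ in t₀..s, (l τ).re) : ℂ)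
  have hg : ContinuousOn g I :=
    Complex.continuous_ofReal.comp_continuousOn (Real.continuous_exp.comp_continuousOn
      (fun t ht => (hI.hasDerivWithinAt_intervalIntegral hre ht₀ ht).continuousWithinAt.neg))
  have hgF : ∀ t ∈ I, ‖g t‖ ≤ Real.exp (-(F t).re) := fun t ht => by
    rw [Complex.norm_real, Real.norm_of_nonneg (Real.exp_nonneg _), hFre t ht]
  obtain ⟨H, hH, hHnorm⟩ := hS.exists_primitive g hg fun t ht =>
    (hI.integrableOn_exp_neg_intervalIntegral hre ht₀ (hS.subset t ht) (hS.measurableSet t) ht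
      (hker t ht)).ofReal
  have hHeq : ∀ t ∈ I, Real.exp (F t).re * ‖H t‖ =
      ∫ s in S t, Real.exp (∫ τ in s..t, (l τ).re) := by
    intro t ht
    rw [hHnorm t ht, integral_complex_ofReal, Complex.norm_real,
      Real.norm_of_nonneg (setIntegral_nonneg (hS.measurableSet t) fun _ _ => Real.exp_nonneg _),
      hFre t ht, hI.setIntegral_exp_intervalIntegral hre ht₀ (hS.subset t ht)
        (hS.measurableSet t) ht]
  have hbound := hK.exp_re_mul_norm_le hI hl hF hH hg hgF (C := C)
    (fun t ht => (hHeq t ht).trans_le (hC t ht)) hLI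
    (hL.congr' (hLI.mono fun t ht => (hFre t ht).symm))
  exact fun t ht => (hHeq t ht).symm.trans_le (hbound t ht)

end TailKernel

theorem ulamStable2C_diagonal_iff {I : Set ℝ} {Λ : ℝ → Fin 2 → ℂ} {K : ℝ} :
    UlamStable2C I (fun t => Matrix.diagonal (Λ t)) K ↔
      0 < K ∧ ∀ i, IsUlamConstant I (fun t => Λ t i) K := by
  refine and_congr_right fun _ => ⟨fun h i => ?_, fun h => ?_⟩
  · intro ε hε φ φd hφ hφd hres
    have hsingle : ∀ t, Pi.single i (φd t) - (Matrix.diagonal (Λ t)).mulVec (Pi.single i (φ t)) =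
        Pi.single i (φd t - Λ t i * φ t) := by
      intro t
      ext j
      rcases eq_or_ne j i with rfl | hj
      · simp [mul_comm]
      · simp [hj]
    let P := ContinuousLinearMap.single ℝ (fun _ : Fin 2 => ℂ) i
    obtain ⟨X, hX, hφX⟩ := h ε hε (fun t => P (φ t)) (fun t => P (φd t))
      (fun t ht => P.hasFDerivAt.comp_hasDerivWithinAt t (hφ t ht))
      (P.continuous.comp_continuousOn hφd)
      (fun t ht => by
        change ‖Pi.single i (φd t) - (Matrix.diagonal (Λ t)).mulVec (Pi.single i (φ t))‖ ≤ ε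
        rw [hsingle, Pi.norm_single]
        exact hres t ht)
    refine ⟨fun t => X t i, fun t ht => ?_, fun t ht => ?_⟩
    · simpa [Matrix.mulVec_diagonal] using hasDerivWithinAt_pi.1 (hX t ht) i
    · simpa [P] using (norm_le_pi_norm (P (φ t) - X t) i).trans (hφX t ht)
  · intro ε hε Φ Φd hΦ hΦd hres
    choose x hx hΦx using fun i => h i ε hε (fun t => Φ t i) (fun t => Φd t i)
      (fun t ht => hasDerivWithinAt_pi.1 (hΦ t ht) i)
      ((continuous_apply i).comp_continuousOn hΦd)
      (fun t ht => by
        simpa only [Pi.sub_apply, Matrix.mulVec_diagonal] using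
          (norm_le_pi_norm _ i).trans (hres t ht))
    refine ⟨fun t i => x i t, fun t ht => ?_, fun t ht => ?_⟩
    · exact hasDerivWithinAt_pi.2 fun i => by simpa [Matrix.mulVec_diagonal] using hx i t ht
    · exact (pi_norm_le_iff_of_nonneg (by positivity)).2 fun i => hΦx i t ht

theorem kappa13_eq (a b : EReal) (l1 l2 : ℝ → ℂ) :
    kappa13 a b l1 l2 = fun t =>
      max (∫ s in upperTail b t, Real.exp (∫ τ in s..t, (l1 τ).re))
        (∫ s in lowerTail a t, Real.exp (∫ τ in s..t, (l2 τ).re)) := by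
  ext t
  simp only [kappa13, upperTail, lowerTail, ← intervalIntegral.integral_symm]

theorem statement8 (a b : EReal) (hab : a < b) (I : Set ℝ)
    (hI1 : ∀ x : ℝ, a < (x : EReal) → (x : EReal) < b → x ∈ I)
    (hI2 : ∀ x ∈ I, a ≤ (x : EReal) ∧ (x : EReal) ≤ b)
    (l1 l2 : ℝ → ℂ) (hl1 : ContinuousOn l1 I) (hl2 : ContinuousOn l2 I)
    (hker1 : ∀ t ∈ I, IntegrableOn
      (fun s => Real.exp (-∫ τ in t..s, (l1 τ).re)) {s : ℝ | t < s ∧ (s : EReal) < b})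
    (hker2 : ∀ t ∈ I, IntegrableOn
      (fun s => Real.exp (∫ τ in s..t, (l2 τ).re)) {s : ℝ | a < (s : EReal) ∧ s < t})
    (hbdd : BddAbove (kappa13 a b l1 l2 '' I))
    (hlim : ∀ t₀ : ℝ, a < (t₀ : EReal) → (t₀ : EReal) < b →
        (Tendsto (fun t => ∫ s in t₀..t, (l1 s).re)
          (Filter.comap (fun x : ℝ => (x : EReal)) (nhdsWithin b (Iio b))) atTop) ∧
        (Tendsto (fun t => ∫ s in t₀..t, (l2 s).re)
          (Filter.comap (fun x : ℝ => (x : EReal)) (nhdsWithin a (Ioi a))) atTop)) :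
    UlamStable2C I (fun t => !![l1 t, 0; 0, l2 t]) (sSup (kappa13 a b l1 l2 '' I)) ∧
    ∀ K : ℝ, UlamStable2C I (fun t => !![l1 t, 0; 0, l2 t]) K → sSup (kappa13 a b l1 l2 '' I) ≤ K := by
  obtain ⟨t₀, hat₀, ht₀b⟩ := EReal.exists_between_coe_real hab
  have hI := ordConnected_of_ereal hI1 hI2
  have ht₀ : t₀ ∈ I := hI1 t₀ hat₀ ht₀b
  have hup := isTailFamily_upperTail hI1 hI2
  have hlo := isTailFamily_lowerTail hI1 hI2
  simp_rw [← intervalIntegral.integral_symm] at hker1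
  rw [kappa13_eq] at hbdd ⊢
  have hκ1 := fun t (ht : t ∈ I) =>
    (le_max_left _ _).trans (le_csSup hbdd (mem_image_of_mem _ ht))
  have hκ2 := fun t (ht : t ∈ I) =>
    (le_max_right _ _).trans (le_csSup hbdd (mem_image_of_mem _ ht))
  have := comap_coe_nhdsLT_neBot ht₀b
  have := comap_coe_nhdsGT_neBot hat₀
  simp only [← Matrix.diagonal_vec2, ulamStable2C_diagonal_iff, Fin.forall_fin_two,
    Matrix.cons_val_zero, Matrix.cons_val_one]
  refine ⟨⟨(setIntegral_exp_upperTail_pos ht₀b (hker1 t₀ ht₀)).trans_le (hκ1 t₀ ht₀),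
      isUlamConstant_of_isTailFamily hI hup hl1 hker1 hκ1,
      isUlamConstant_of_isTailFamily hI hlo hl2 hker2 hκ2⟩,
    fun K ⟨_, hK1, hK2⟩ => csSup_le ⟨_, mem_image_of_mem _ ht₀⟩
      (forall_mem_image.2 fun t ht => max_le ?_ ?_)⟩
  · exact hK1.setIntegral_le_of_isTailFamily hI hup hl1 hker1 hκ1 ht₀
      (eventually_comap_coe_nhdsLT_mem hI1 hat₀ ht₀b) (hlim t₀ hat₀ ht₀b).1 t ht
  · exact hK2.setIntegral_le_of_isTailFamily hI hlo hl2 hker2 hκ2 ht₀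
      (eventually_comap_coe_nhdsGT_mem hI1 hat₀ ht₀b) (hlim t₀ hat₀ ht₀b).2 t ht
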